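/- For every i ∈ V: An_low^{pa(i)}(i) = pa^B(i), the set of parents of i in the minimum max-linear DAG 𝒟^B; and for every z ∈ [0,∞)^d the recursive max-linear values x on 𝒟 satisfy x_i = max( max_{k ∈ pa^B(i)} (b_{ki}/b_{kk}) x_k , b_{ii} z_i ). -/

import Mathlib

open scoped NNReal ENNReal Classical

namespace MaxLinearDAG

variable {d : ℕ}

/-- `p` is a directed path (with at least one edge) from `j` to `i` in the edge relation `E`. -/
def PathFrom (E : Fin d → Fin d → Prop) (j i : Fin d) (p : List (Fin d)) : Prop :=
  2 ≤ p.length ∧ p.head? = some j ∧ p.getLast? = some i ∧ List.Chain' E p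

/-- The directed graph given by `E` is acyclic: no directed path from a node to itself. -/
def Acyclic (E : Fin d → Fin d → Prop) : Prop :=
  ∀ i, ¬ ∃ p, PathFrom E i i p

/-- `j` is an ancestor of `i`: there is a path from `j` to `i`. -/
def anc (E : Fin d → Fin d → Prop) (j i : Fin d) : Prop :=
  ∃ p, PathFrom E j i p

/-- The weight of a path `p` starting at `j`: `c j j` times the product of the
edge weights along `p`. -/
noncomputable def pathWeight (c : Fin d → Fin d → ℝ≥0) (j : Fin d) (p : List (Fin d)) : ℝ≥0 :=
  c j j * ((p.zip p.tail).map fun q => c q.1 q.2).prod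

/-- `b` is the max-linear coefficient matrix of the recursive ML model on `(E, c)`:
for `j ∈ an(i)`, `b j i` is the (attained) maximum of the path weights over all paths
from `j` to `i`; `b i i = c i i`; and `b j i = 0` for `j ∉ An(i)`. -/
def IsMLMatrix (E : Fin d → Fin d → Prop) (c b : Fin d → Fin d → ℝ≥0) : Prop :=
  (∀ i, b i i = c i i) ∧
  (∀ j i, j ≠ i → ¬ anc E j i → b j i = 0) ∧
  (∀ j i p, PathFrom E j i p → pathWeight c j p ≤ b j i) ∧
  (∀ j i, anc E j i → ∃ p, PathFrom E j i p ∧ pathWeight c j p = b j i)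

/-- `x` is the vector of recursive max-linear values on `(E, c)` for noise `z`:
`x i = max (max_{k ∈ pa(i)} c k i * x k) (c i i * z i)`, empty max being `0`. -/
def IsRecML (E : Fin d → Fin d → Prop) (c : Fin d → Fin d → ℝ≥0) (z x : Fin d → ℝ≥0) : Prop :=
  ∀ i, x i = (Finset.univ.sup fun k => if E k i then c k i * x k else 0) ⊔ c i i * z i

/-- Max-times matrix product `F ⊙ G`. -/
noncomputable def mprod (F G : Fin d → Fin d → ℝ≥0) : Fin d → Fin d → ℝ≥0 :=
  fun i j => Finset.univ.sup fun k => F i k * G k j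

/-- Max-times matrix power, `mpow A 0` being the identity matrix. -/
noncomputable def mpow (A : Fin d → Fin d → ℝ≥0) : ℕ → Fin d → Fin d → ℝ≥0
  | 0 => fun i j => if i = j then 1 else 0
  | n + 1 => mprod (mpow A n) A

/-- `p` is a max-weighted path from `j` to `i`. -/
def MaxWeighted (E : Fin d → Fin d → Prop) (c b : Fin d → Fin d → ℝ≥0)
    (j i : Fin d) (p : List (Fin d)) : Prop :=
  PathFrom E j i p ∧ pathWeight c j p = b j i

/-- The lowest max-weighted ancestors of `i` in `U`: nodes `j ∈ An(i) ∩ U` such that no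
max-weighted path from `j` to `i` passes through a node of `U \ {j}`. -/
def AnLow (E : Fin d → Fin d → Prop) (c b : Fin d → Fin d → ℝ≥0)
    (U : Set (Fin d)) (i : Fin d) : Set (Fin d) :=
  {j | (anc E j i ∨ j = i) ∧ j ∈ U ∧
    ∀ p, MaxWeighted E c b j i p → ¬ ∃ u ∈ U \ {j}, u ∈ p}

/-- The highest max-weighted descendants of `i` in `U`: nodes `l ∈ De(i) ∩ U` such that no
max-weighted path from `i` to `l` passes through a node of `U \ {l}`. -/
def DeHigh (E : Fin d → Fin d → Prop) (c b : Fin d → Fin d → ℝ≥0)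
    (U : Set (Fin d)) (i : Fin d) : Set (Fin d) :=
  {l | (anc E i l ∨ l = i) ∧ l ∈ U ∧
    ∀ p, MaxWeighted E c b i l p → ¬ ∃ u ∈ U \ {l}, u ∈ p}

/-!
Path weights multiply under concatenation at a node `u`, up to the factor `c u u = b u u`.
Hence a max-weighted path from `k` to `i` passes through `u` exactly when
`b k i * b u u ≤ b k u * b u i`, so a parent `k` of `i` is a lowest max-weighted ancestor in
`pa(i)` iff it satisfies the strict inequality defining `E^B`.

For the recursion, following a max-weighted path gives `(b j i / b j j) * x j ≤ x i` for every
ancestor `j` of `i`. A parent `k ∉ pa^B(i)` has a max-weighted path to `i` through another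
parent `l ∈ de(k)`, so `(b k i / b k k) * x k ≤ (b l i / b l l) * x l`; descending induction on
the DAG ends in `pa^B(i)`.
-/

noncomputable def edgeProd (c : Fin d → Fin d → ℝ≥0) (p : List (Fin d)) : ℝ≥0 :=
  ((p.zip p.tail).map fun q => c q.1 q.2).prod

theorem pathWeight_eq_mul_edgeProd (c : Fin d → Fin d → ℝ≥0) (j : Fin d) (p : List (Fin d)) :
    pathWeight c j p = c j j * edgeProd c p := rfl

@[simp] theorem edgeProd_singleton (c : Fin d → Fin d → ℝ≥0) (a : Fin d) :
    edgeProd c [a] = 1 := by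
  simp [edgeProd]

theorem edgeProd_cons_cons (c : Fin d → Fin d → ℝ≥0) (a y : Fin d) (t : List (Fin d)) :
    edgeProd c (a :: y :: t) = c a y * edgeProd c (y :: t) := by
  simp [edgeProd]

theorem edgeProd_append_of_getLast? (c : Fin d → Fin d → ℝ≥0) {l : Fin d} :
    ∀ {p : List (Fin d)} (r : List (Fin d)), p.getLast? = some l →
      edgeProd c (p ++ r) = edgeProd c p * edgeProd c (l :: r)
  | [], _, h => by simp at h
  | [a], r, h => by
    obtain rfl : a = l := by simpa using h
    simp
  | a :: y :: t, r, h => by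
    have h' : (y :: t).getLast? = some l := by simpa using h
    rw [List.cons_append, List.cons_append, edgeProd_cons_cons, ← List.cons_append,
      edgeProd_append_of_getLast? c r h', edgeProd_cons_cons, mul_assoc]

section Paths

variable {E : Fin d → Fin d → Prop}

theorem pathFrom_pair {j i : Fin d} (h : E j i) : PathFrom E j i [j, i] :=
  ⟨by simp, rfl, rfl, List.isChain_pair.2 h⟩

theorem anc_of_edge {j i : Fin d} (h : E j i) : anc E j i :=
  ⟨[j, i], pathFrom_pair h⟩

theorem PathFrom.append {j l i : Fin d} {p q : List (Fin d)}
    (hp : PathFrom E j l p) (hq : PathFrom E l i q) : PathFrom E j i (p ++ q.tail) := by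
  obtain ⟨hlen, hhead, hlast, hchain⟩ := hp
  obtain ⟨hlen', hhead', hlast', hchain'⟩ := hq
  obtain ⟨y, t, rfl⟩ : ∃ y t, q = l :: y :: t := by
    match q, hlen', hhead' with
    | a :: y :: t, _, h => exact ⟨y, t, by simp_all⟩
  have hly : E l y := (List.isChain_cons_cons.1 hchain').1
  refine ⟨by simp only [List.length_append, List.tail_cons, List.length_cons]; omega,
    by simp [List.head?_append, hhead], ?_, ?_⟩
  · simpa [List.getLast?_append] using hlast'
  · refine hchain.append hchain'.tail fun x hx y' hy' => ?_
    rw [hlast, Option.mem_some_iff] at hx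
    obtain rfl : y = y' := by simpa using hy'
    exact hx ▸ hly

theorem PathFrom.exists_split {j i u : Fin d} {p : List (Fin d)} (hp : PathFrom E j i p)
    (hu : u ∈ p) (huj : u ≠ j) (hui : u ≠ i) :
    ∃ p₁ p₂, PathFrom E j u p₁ ∧ PathFrom E u i p₂ ∧ p = p₁ ++ p₂.tail := by
  obtain ⟨hlen, hhead, hlast, hchain⟩ := hp
  obtain ⟨s, t, rfl⟩ := List.append_of_mem hu
  have hs : s ≠ [] := by rintro rfl; simp_all
  have ht : t ≠ [] := by rintro rfl; simp_all
  have hsplit : s ++ u :: t = (s ++ [u]) ++ t := by simp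
  refine ⟨s ++ [u], u :: t, ⟨?_, ?_, by simp, ?_⟩, ⟨?_, rfl, ?_, hchain.right_of_append⟩, hsplit⟩
  · simpa [Nat.one_le_iff_ne_zero] using hs
  · simpa [List.head?_append, List.head?_eq_none_iff.not.2 hs] using hhead
  · exact (hsplit ▸ hchain).left_of_append
  · simpa [Nat.one_le_iff_ne_zero] using ht
  · simpa [List.getLast?_append, List.getLast?_eq_none_iff.not.2 ht] using hlast

theorem PathFrom.pathWeight_append (c : Fin d → Fin d → ℝ≥0) {j l i : Fin d}
    {p q : List (Fin d)} (hp : PathFrom E j l p) (hq : PathFrom E l i q) :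
    pathWeight c j (p ++ q.tail) * c l l = pathWeight c j p * pathWeight c l q := by
  obtain ⟨t, rfl⟩ : ∃ t, q = l :: t := by
    match q, hq.2.1 with
    | a :: t, h => exact ⟨t, by simp_all⟩
  simp only [pathWeight_eq_mul_edgeProd, List.tail_cons, edgeProd_append_of_getLast? c t hp.2.2.1]
  ring

theorem anc_trans {j l i : Fin d} (h₁ : anc E j l) (h₂ : anc E l i) : anc E j i :=
  let ⟨_, hp⟩ := h₁
  let ⟨_, hq⟩ := h₂
  ⟨_, hp.append hq⟩

theorem Acyclic.ne_of_anc (hE : Acyclic E) {j i : Fin d} (h : anc E j i) : j ≠ i := by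
  rintro rfl
  exact hE j h

theorem Acyclic.ne_of_edge (hE : Acyclic E) {j i : Fin d} (h : E j i) : j ≠ i :=
  hE.ne_of_anc (anc_of_edge h)

theorem Acyclic.wellFounded_anc (hE : Acyclic E) : WellFounded fun l k => anc E k l :=
  @Finite.wellFounded_of_trans_of_irrefl _ _ _
    ⟨fun _ _ _ h₁ h₂ => anc_trans h₂ h₁⟩ ⟨fun k h => hE k h⟩

end Paths

section MLMatrix

variable {E : Fin d → Fin d → Prop} {c b : Fin d → Fin d → ℝ≥0}

theorem edgeProd_pos (hce : ∀ k i, E k i → 0 < c k i) :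
    ∀ {p : List (Fin d)}, List.IsChain E p → 0 < edgeProd c p
  | [], _ => by simp [edgeProd]
  | [_], _ => by simp
  | a :: y :: t, h => by
    obtain ⟨hay, h⟩ := List.isChain_cons_cons.1 h
    rw [edgeProd_cons_cons]
    exact mul_pos (hce a y hay) (edgeProd_pos hce h)

theorem pathWeight_pos (hcd : ∀ i, 0 < c i i) (hce : ∀ k i, E k i → 0 < c k i)
    {j i : Fin d} {p : List (Fin d)} (hp : PathFrom E j i p) : 0 < pathWeight c j p :=
  mul_pos (hcd j) (edgeProd_pos hce hp.2.2.2)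

theorem IsMLMatrix.pos_of_anc (hcd : ∀ i, 0 < c i i) (hce : ∀ k i, E k i → 0 < c k i)
    (hb : IsMLMatrix E c b) {j i : Fin d} (h : anc E j i) : 0 < b j i :=
  let ⟨p, hp⟩ := h
  (pathWeight_pos hcd hce hp).trans_le (hb.2.2.1 j i p hp)

theorem IsMLMatrix.le_div_of_edge (hcd : ∀ i, 0 < c i i) (hb : IsMLMatrix E c b)
    {k i : Fin d} (h : E k i) : c k i ≤ b k i / b k k := by
  rw [hb.1 k, le_div_iff₀ (hcd k), mul_comm]
  simpa [pathWeight_eq_mul_edgeProd, edgeProd_cons_cons] using hb.2.2.1 k i _ (pathFrom_pair h)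

theorem IsMLMatrix.exists_maxWeighted_mem_iff (hcd : ∀ i, 0 < c i i) (hb : IsMLMatrix E c b)
    {j i u : Fin d} (huj : u ≠ j) (hui : u ≠ i) :
    (∃ p, MaxWeighted E c b j i p ∧ u ∈ p) ↔
      anc E j u ∧ anc E u i ∧ b j i * b u u ≤ b j u * b u i := by
  rw [hb.1 u]
  constructor
  · rintro ⟨p, ⟨hp, hpw⟩, hu⟩
    obtain ⟨p₁, p₂, hp₁, hp₂, rfl⟩ := hp.exists_split hu huj hui
    refine ⟨⟨p₁, hp₁⟩, ⟨p₂, hp₂⟩, ?_⟩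
    rw [← hpw, hp₁.pathWeight_append c hp₂]
    exact mul_le_mul' (hb.2.2.1 _ _ _ hp₁) (hb.2.2.1 _ _ _ hp₂)
  · rintro ⟨hju, hui, hle⟩
    obtain ⟨p₁, hp₁, hw₁⟩ := hb.2.2.2 j u hju
    obtain ⟨p₂, hp₂, hw₂⟩ := hb.2.2.2 u i hui
    have hp := hp₁.append hp₂
    refine ⟨_, ⟨hp, le_antisymm (hb.2.2.1 j i _ hp) ?_⟩,
      List.mem_append_left _ (List.mem_of_getLast? hp₁.2.2.1)⟩
    refine le_of_mul_le_mul_right ?_ (hcd u)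
    rwa [hp₁.pathWeight_append c hp₂, hw₁, hw₂]

end MLMatrix

/-- The parents `pa^B(i)` of `i` in the minimum max-linear DAG `𝒟^B`. -/
abbrev minMLParents (E : Fin d → Fin d → Prop) (b : Fin d → Fin d → ℝ≥0) (i : Fin d) :
    Set (Fin d) :=
  {k | E k i ∧
    (Finset.univ.sup fun l => if anc E k l ∧ E l i then b k l * b l i / b l l else 0) < b k i}

section MinMLParents

variable {E : Fin d → Fin d → Prop} {c b : Fin d → Fin d → ℝ≥0}

theorem mem_minMLParents_iff (hcd : ∀ i, 0 < c i i) (hce : ∀ k i, E k i → 0 < c k i)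
    (hb : IsMLMatrix E c b) {k i : Fin d} :
    k ∈ minMLParents E b i ↔
      E k i ∧ ∀ l, anc E k l → E l i → ¬ b k i * b l l ≤ b k l * b l i := by
  refine and_congr_right fun hki => ?_
  rw [Finset.sup_lt_iff (hb.pos_of_anc hcd hce (anc_of_edge hki))]
  refine forall_congr' fun l => ?_
  simp only [Finset.mem_univ, true_imp_iff]
  split_ifs with hl
  · rw [hb.1 l, div_lt_iff₀ (hcd l), ← not_le]
    simp [hl]
  · simp only [hb.pos_of_anc hcd hce (anc_of_edge hki), true_iff]
    exact fun h₁ h₂ => absurd ⟨h₁, h₂⟩ hl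

theorem anLow_parents_eq_minMLParents (hE : Acyclic E) (hcd : ∀ i, 0 < c i i)
    (hce : ∀ k i, E k i → 0 < c k i) (hb : IsMLMatrix E c b) (i : Fin d) :
    AnLow E c b {k | E k i} i = minMLParents E b i := by
  ext k
  rw [mem_minMLParents_iff hcd hce hb]
  simp only [AnLow, Set.mem_ofPred_eq, Set.mem_sdiff, Set.mem_singleton_iff]
  constructor
  · rintro ⟨-, hki, hlow⟩
    refine ⟨hki, fun l hkl hli hle => ?_⟩
    have hlk := (hE.ne_of_anc hkl).symm
    obtain ⟨p, hp, hl⟩ := (hb.exists_maxWeighted_mem_iff hcd hlk (hE.ne_of_edge hli)).2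
      ⟨hkl, anc_of_edge hli, hle⟩
    exact hlow p hp ⟨l, ⟨hli, hlk⟩, hl⟩
  · rintro ⟨hki, hmin⟩
    refine ⟨Or.inl (anc_of_edge hki), hki, fun p hp ⟨u, ⟨hui, huk⟩, hu⟩ => ?_⟩
    obtain ⟨hku, -, hle⟩ :=
      (hb.exists_maxWeighted_mem_iff hcd huk (hE.ne_of_edge hui)).1 ⟨p, hp, hu⟩
    exact hmin u hku hui hle

end MinMLParents

section RecML

variable {E : Fin d → Fin d → Prop} {c b : Fin d → Fin d → ℝ≥0} {z x : Fin d → ℝ≥0}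

theorem IsRecML.mul_le_of_edge (hx : IsRecML E c z x) {k i : Fin d} (h : E k i) :
    c k i * x k ≤ x i := by
  rw [hx i]
  exact le_sup_of_le_left
    (Finset.le_sup_of_le (f := fun k => if E k i then c k i * x k else 0) (Finset.mem_univ k)
      (by simp [h]))

theorem IsRecML.edgeProd_mul_le (hx : IsRecML E c z x) :
    ∀ {a : Fin d} {t : List (Fin d)}, List.IsChain E (a :: t) →
      edgeProd c (a :: t) * x a ≤ x ((a :: t).getLast (List.cons_ne_nil a t))
  | _, [], _ => by simp
  | a, y :: t, h => by
    obtain ⟨hay, h⟩ := List.isChain_cons_cons.1 h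
    calc edgeProd c (a :: y :: t) * x a = edgeProd c (y :: t) * (c a y * x a) := by
          rw [edgeProd_cons_cons]; ring
      _ ≤ edgeProd c (y :: t) * x y := mul_le_mul_right (hx.mul_le_of_edge hay) _
      _ ≤ _ := hx.edgeProd_mul_le h

theorem IsRecML.div_mul_le_of_anc (hcd : ∀ i, 0 < c i i) (hb : IsMLMatrix E c b)
    (hx : IsRecML E c z x) {j i : Fin d} (h : anc E j i) : b j i / b j j * x j ≤ x i := by
  obtain ⟨p, ⟨-, hhead, hlast, hchain⟩, hw⟩ := hb.2.2.2 j i h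
  obtain ⟨t, rfl⟩ : ∃ t, p = j :: t := by
    match p, hhead with
    | a :: t, h => exact ⟨t, by simp_all⟩
  rw [List.getLast?_eq_some_getLast (List.cons_ne_nil j t), Option.some_inj] at hlast
  rw [← hw, hb.1 j, pathWeight_eq_mul_edgeProd, mul_div_cancel_left₀ _ (hcd j).ne', ← hlast]
  exact hx.edgeProd_mul_le hchain

theorem IsRecML.div_mul_le_sup_minMLParents (hE : Acyclic E) (hcd : ∀ i, 0 < c i i)
    (hce : ∀ k i, E k i → 0 < c k i) (hb : IsMLMatrix E c b) (hx : IsRecML E c z x)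
    {i : Fin d} (k : Fin d) (hki : E k i) :
    b k i / b k k * x k ≤
      Finset.univ.sup fun k => if k ∈ minMLParents E b i then b k i / b k k * x k else 0 := by
  induction k using hE.wellFounded_anc.induction with
  | _ k ih =>
  by_cases hk : k ∈ minMLParents E b i
  · exact Finset.le_sup_of_le (Finset.mem_univ k) (by rw [if_pos hk])
  obtain ⟨l, hkl, hli, hle⟩ : ∃ l, anc E k l ∧ E l i ∧ b k i * b l l ≤ b k l * b l i := by
    simpa [mem_minMLParents_iff hcd hce hb, hki] using hk
  have hbll : 0 < b l l := hb.1 l ▸ hcd l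
  have hki_le : b k i ≤ b l i / b l l * b k l := by
    rw [div_mul_eq_mul_div, le_div_iff₀ hbll, mul_comm (b l i)]
    exact hle
  calc b k i / b k k * x k ≤ b l i / b l l * b k l / b k k * x k := by gcongr
    _ = b l i / b l l * (b k l / b k k * x k) := by rw [mul_div_assoc, mul_assoc]
    _ ≤ b l i / b l l * x l := mul_le_mul_right (hx.div_mul_le_of_anc hcd hb hkl) _
    _ ≤ _ := ih l hkl hli

theorem IsRecML.eq_sup_minMLParents (hE : Acyclic E) (hcd : ∀ i, 0 < c i i)
    (hce : ∀ k i, E k i → 0 < c k i) (hb : IsMLMatrix E c b) (hx : IsRecML E c z x)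
    (i : Fin d) :
    x i = (Finset.univ.sup fun k =>
      if k ∈ minMLParents E b i then b k i / b k k * x k else 0) ⊔ b i i * z i := by
  apply le_antisymm
  · rw [hx i, hb.1 i]
    refine sup_le_sup (Finset.sup_le fun k _ => ?_) le_rfl
    split_ifs with hki
    · exact (mul_le_mul_left (hb.le_div_of_edge hcd hki) _).trans
        (hx.div_mul_le_sup_minMLParents hE hcd hce hb k hki)
    · exact zero_le
  · refine sup_le (Finset.sup_le fun k _ => ?_) ?_
    · split_ifs with hk
      · exact hx.div_mul_le_of_anc hcd hb (anc_of_edge hk.1)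
      · exact zero_le
    · rw [hb.1 i, hx i]
      exact le_sup_right

end RecML

theorem stmt19_general {d : ℕ} (E : Fin d → Fin d → Prop) (hE : Acyclic E)
    (c : Fin d → Fin d → ℝ≥0) (hcd : ∀ i, 0 < c i i) (hce : ∀ k i, E k i → 0 < c k i)
    (b : Fin d → Fin d → ℝ≥0) (hb : IsMLMatrix E c b) (i : Fin d) :
    let paB : Set (Fin d) := {k | E k i ∧
      (Finset.univ.sup fun l =>
        if anc E k l ∧ E l i then b k l * b l i / b l l else 0) < b k i}
    AnLow E c b {k | E k i} i = paB ∧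
    ∀ z x : Fin d → ℝ≥0, IsRecML E c z x →
      x i = (Finset.univ.sup fun k => if k ∈ paB then (b k i / b k k) * x k else 0) ⊔
        b i i * z i :=
  ⟨anLow_parents_eq_minMLParents hE hcd hce hb i,
    fun _ _ hx => hx.eq_sup_minMLParents hE hcd hce hb i⟩

/-- For every `i ∈ V`: `An_low^{pa(i)}(i) = pa^B(i)`, the set of parents of
`i` in the minimum max-linear DAG `𝒟^B`; and for every `z` the recursive max-linear values
`x` on `𝒟` satisfy `x i = max (max_{k ∈ pa^B(i)} (b k i / b k k) * x k) (b i i * z i)`. -/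
theorem stmt19 {d : ℕ} (hd : 1 ≤ d) (E : Fin d → Fin d → Prop) (hE : Acyclic E)
    (c : Fin d → Fin d → ℝ≥0) (hcd : ∀ i, 0 < c i i) (hce : ∀ k i, E k i → 0 < c k i)
    (b : Fin d → Fin d → ℝ≥0) (hb : IsMLMatrix E c b) (i : Fin d) :
    let paB : Set (Fin d) := {k | E k i ∧
      (Finset.univ.sup fun l =>
        if anc E k l ∧ E l i then b k l * b l i / b l l else 0) < b k i}
    AnLow E c b {k | E k i} i = paB ∧
    ∀ z x : Fin d → ℝ≥0, IsRecML E c z x →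
      x i = (Finset.univ.sup fun k => if k ∈ paB then (b k i / b k k) * x k else 0) ⊔
        b i i * z i :=
  stmt19_general E hE c hcd hce b hb i

end MaxLinearDAG
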